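/- If x : ℕ → {0,1} is classical normal (i.e., the binary sequence x is normal in the classical sense), then for every n ∈ ℕ the sequence k ↦ x(n·k) is also classical normal. Equivalently, if A ⊆ ℕ is a classical normal set, then A/n = {m ∈ ℕ : n·m ∈ A} is classical normal for every n ∈ ℕ. -/

import Mathlib

/-!
Fix a block `B` on `K` and let `f` be the indicator that `x` shows `B` (read on `n·K`) at
offset `m`, so that `x (n ·)` shows `B` at offset `q` iff `f (n q) = 1`. Normality of `x` says
that `f` has mean `E = 2^{-|K|}`, and, applied to the union of `n·K` and its translate by `n d`
for `d ≥ max K`, that `f(m) f(m + n d)` has mean `E²`. Hence `g = f - E` is uncorrelated with its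
shifts by `n d` for all large `d`, and the van der Corput argument shows that `g` has mean `0`
along `nℕ`: replacing `g` by its averages over `m, m + n, …, m + n(H-1)` changes the sum along
`n, 2n, …, nN` by `O(H)`, and by Cauchy–Schwarz that sum is controlled by the mean square of these
averages over all of `ℕ`, which is `O(M/H)` because only `O(MH)` of the `H²` pairs of lags are
closer than `M`.
-/

open Filter

/- `x : ℕ → {0,1}` is a classical normal binary sequence: for every nonempty finite
`K ⊆ {1,2,…}` and every block `B : K → {0,1}`,
`(1/n) · |{m ∈ {1,…,n} : ∀ k ∈ K, x (k+m) = B k}| → 2^{-|K|}`. -/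
def ClassicalNormalFun (x : ℕ → Bool) : Prop :=
  ∀ K : Finset ℕ, K.Nonempty → (∀ k ∈ K, 0 < k) → ∀ B : ℕ → Bool,
    Tendsto
      (fun n =>
        (((Finset.Icc 1 n).filter (fun m => ∀ k ∈ K, x (k + m) = B k)).card : ℝ) / n)
      atTop (nhds ((1 / 2 : ℝ) ^ K.card))

open Finset Topology

def HasCesaroMean (g : ℕ → ℝ) (L : ℝ) : Prop :=
  Tendsto (fun N : ℕ => (∑ m ∈ Icc 1 N, g m) / N) atTop (𝓝 L)

theorem sum_Icc_one_eq_sum_range (g : ℕ → ℝ) (N : ℕ) :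
    ∑ m ∈ Icc 1 N, g m = ∑ i ∈ range N, g (i + 1) := by
  rw [← Ico_add_one_right_eq_Icc, sum_Ico_eq_sum_range, Nat.add_sub_cancel]
  simp only [add_comm]

theorem abs_sum_range_le {g : ℕ → ℝ} {C : ℝ} (hg : ∀ m, |g m| ≤ C) (a : ℕ) :
    |∑ i ∈ range a, g i| ≤ a * C :=
  (abs_sum_le_sum_abs _ _).trans (by simpa using sum_le_sum (s := range a) fun i _ => hg i)

theorem abs_sum_Icc_comp_add_sub_le {g : ℕ → ℝ} {C : ℝ} (hg : ∀ m, |g m| ≤ C) (a N : ℕ) :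
    |∑ m ∈ Icc 1 N, g (m + a) - ∑ m ∈ Icc 1 N, g m| ≤ 2 * a * C := by
  -- both sums are the sum over `1, …, N + a` with a different block of length `a` cut off
  have key : ∑ m ∈ Icc 1 N, g (m + a) - ∑ m ∈ Icc 1 N, g m
      = ∑ i ∈ range a, g (N + i + 1) - ∑ i ∈ range a, g (i + 1) := by
    have h₁ := sum_range_add (fun i => g (i + 1)) a N
    have h₂ := sum_range_add (fun i => g (i + 1)) N a
    rw [add_comm a N] at h₁
    simp only [sum_Icc_one_eq_sum_range, add_comm _ a, ← add_assoc] at h₁ h₂ ⊢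
    linarith
  rw [key]
  linarith [abs_sub (∑ i ∈ range a, g (N + i + 1)) (∑ i ∈ range a, g (i + 1)),
    abs_sum_range_le (fun i => hg (N + i + 1)) a, abs_sum_range_le (fun i => hg (i + 1)) a]

namespace HasCesaroMean

variable {f g : ℕ → ℝ} {K L : ℝ}

theorem add (hf : HasCesaroMean f K) (hg : HasCesaroMean g L) :
    HasCesaroMean (fun m => f m + g m) (K + L) := by
  simpa only [HasCesaroMean, sum_add_distrib, add_div] using Tendsto.add hf hg

theorem sub (hf : HasCesaroMean f K) (hg : HasCesaroMean g L) :
    HasCesaroMean (fun m => f m - g m) (K - L) := by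
  simpa only [HasCesaroMean, sum_sub_distrib, sub_div] using Tendsto.sub hf hg

theorem const_mul (c : ℝ) (hg : HasCesaroMean g L) :
    HasCesaroMean (fun m => c * g m) (c * L) := by
  simpa only [HasCesaroMean, ← mul_sum, mul_div_assoc] using Tendsto.const_mul c hg

theorem const (c : ℝ) : HasCesaroMean (fun _ => c) c := by
  refine tendsto_const_nhds.congr' ?_
  filter_upwards [eventually_ne_atTop 0] with N hN
  simp [field]

theorem eventually_sum_le (hg : HasCesaroMean g 0) {δ : ℝ} (hδ : 0 < δ) :
    ∀ᶠ N : ℕ in atTop, ∑ m ∈ Icc 1 N, g m ≤ δ * N := by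
  filter_upwards [hg.eventually (gt_mem_nhds hδ)] with N hN
  rcases N.eq_zero_or_pos with rfl | hN₀
  · simp
  · exact ((div_lt_iff₀ (by exact_mod_cast hN₀)).1 hN).le

theorem comp_add {C : ℝ} (hbdd : ∀ m, |g m| ≤ C) (hg : HasCesaroMean g L) (a : ℕ) :
    HasCesaroMean (fun m => g (m + a)) L := by
  have hdiff : Tendsto (fun N : ℕ => (∑ m ∈ Icc 1 N, g (m + a) - ∑ m ∈ Icc 1 N, g m) / N)
      atTop (𝓝 0) := by
    refine squeeze_zero_norm (fun N => ?_) (tendsto_const_div_atTop_nhds_zero_nat (2 * a * C))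
    rw [norm_div, Real.norm_natCast]
    exact div_le_div_of_nonneg_right (abs_sum_Icc_comp_add_sub_le hbdd a N) N.cast_nonneg
  simpa only [HasCesaroMean, sub_div, sub_add_cancel, zero_add] using hdiff.add hg

end HasCesaroMean

def apSum (g : ℕ → ℝ) (n H m : ℕ) : ℝ := ∑ h ∈ range H, g (m + n * h)

theorem sq_apSum (g : ℕ → ℝ) (n H m : ℕ) :
    apSum g n H m ^ 2 = ∑ p ∈ range H ×ˢ range H, g (m + n * p.1) * g (m + n * p.2) := by
  rw [apSum, sq, sum_mul_sum, sum_product]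

theorem abs_sum_apSum_comp_mul_sub_le {g : ℕ → ℝ} (hg : ∀ m, |g m| ≤ 1) (n H N : ℕ) :
    |∑ q ∈ Icc 1 N, apSum g n H (n * q) - H * ∑ q ∈ Icc 1 N, g (n * q)| ≤ 2 * H ^ 2 := by
  have hsplit : ∑ q ∈ Icc 1 N, apSum g n H (n * q) - H * ∑ q ∈ Icc 1 N, g (n * q)
      = ∑ h ∈ range H, (∑ q ∈ Icc 1 N, g (n * (q + h)) - ∑ q ∈ Icc 1 N, g (n * q)) := by
    simp only [apSum, sum_sub_distrib, sum_const, card_range, nsmul_eq_mul, mul_add]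
    rw [sum_comm]
  rw [hsplit]
  calc _ ≤ ∑ h ∈ range H, |∑ q ∈ Icc 1 N, g (n * (q + h)) - ∑ q ∈ Icc 1 N, g (n * q)| :=
        abs_sum_le_sum_abs _ _
    _ ≤ ∑ _h ∈ range H, 2 * (H : ℝ) := by
        refine sum_le_sum fun h hh => ?_
        have hhH : (h : ℝ) ≤ H := by exact_mod_cast (mem_range.1 hh).le
        linarith [abs_sum_Icc_comp_add_sub_le (g := fun q => g (n * q)) (fun q => hg _) h N]
    _ = 2 * H ^ 2 := by rw [sum_const, card_range, nsmul_eq_mul]; ring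

theorem sq_sum_Icc_comp_mul_le {n : ℕ} (w : ℕ → ℝ) (hn : 0 < n) (N : ℕ) :
    (∑ q ∈ Icc 1 N, w (n * q)) ^ 2 ≤ N * ∑ m ∈ Icc 1 (n * N), w m ^ 2 := by
  have hsub : (Icc 1 N).image (n * ·) ⊆ Icc 1 (n * N) := by
    intro m hm
    simp only [mem_image, mem_Icc] at hm ⊢
    obtain ⟨q, ⟨hq₁, hqN⟩, rfl⟩ := hm
    exact ⟨Nat.one_le_iff_ne_zero.2 (Nat.mul_ne_zero hn.ne' (by omega)), Nat.mul_le_mul_left n hqN⟩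
  calc (∑ q ∈ Icc 1 N, w (n * q)) ^ 2 ≤ #(Icc 1 N) * ∑ q ∈ Icc 1 N, w (n * q) ^ 2 :=
        sq_sum_le_card_mul_sum_sq
    _ = N * ∑ m ∈ (Icc 1 N).image (n * ·), w m ^ 2 := by
        rw [sum_image fun a _ b _ hab => Nat.eq_of_mul_eq_mul_left hn hab, Nat.card_Icc,
          Nat.add_sub_cancel]
    _ ≤ N * ∑ m ∈ Icc 1 (n * N), w m ^ 2 := by
        gcongr

theorem card_filter_lt_add_lt_add_le (H M : ℕ) :
    #{p ∈ range H ×ˢ range H | p.1 < p.2 + M ∧ p.2 < p.1 + M} ≤ 2 * M * H := by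
  -- `(h, h')` is determined by `h` and the offset `h' + M - h < 2 * M`
  calc _ ≤ #(range H ×ˢ range (2 * M)) := by
        refine card_le_card_of_injOn (fun p => (p.1, p.2 + M - p.1)) (fun p hp => ?_)
          fun p hp q hq hpq => ?_
        · simp only [coe_filter, mem_product, mem_range, Set.mem_ofPred_eq, mem_coe] at hp ⊢
          omega
        · simp only [coe_filter, mem_product, mem_range, Set.mem_ofPred_eq, Prod.mk.injEq]
            at hp hq hpq
          exact Prod.ext hpq.1 (by omega)
    _ = 2 * M * H := by rw [card_product, card_range, card_range, mul_comm]

section VanDerCorput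

variable {g : ℕ → ℝ} {n M : ℕ}

theorem hasCesaroMean_mul_comp_add_of_far (hg : ∀ m, |g m| ≤ 1)
    (hcorr : ∀ d, M ≤ d → HasCesaroMean (fun m => g m * g (m + n * d)) 0) {h h' : ℕ}
    (hfar : h' + M ≤ h ∨ h + M ≤ h') :
    HasCesaroMean (fun m => g (m + n * h) * g (m + n * h')) 0 := by
  have hprod : ∀ d m, |g m * g (m + n * d)| ≤ 1 := fun d m => by
    rw [abs_mul]; exact mul_le_one₀ (hg _) (abs_nonneg _) (hg _)
  have key : ∀ a d, M ≤ d → HasCesaroMean (fun m => g (m + n * a) * g (m + n * (a + d))) 0 :=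
    fun a d hd => by
      convert (hcorr d hd).comp_add (hprod d) (n * a) using 3 with m
      ring_nf
  rcases hfar with hfar | hfar
  · obtain ⟨d, rfl⟩ := Nat.exists_eq_add_of_le (le_of_add_le_left hfar)
    simpa only [mul_comm] using key h' d (by omega)
  · obtain ⟨d, rfl⟩ := Nat.exists_eq_add_of_le (le_of_add_le_left hfar)
    exact key h d (by omega)

theorem eventually_sum_sq_apSum_le (hg : ∀ m, |g m| ≤ 1)
    (hcorr : ∀ d, M ≤ d → HasCesaroMean (fun m => g m * g (m + n * d)) 0) (H : ℕ) {δ : ℝ}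
    (hδ : 0 < δ) :
    ∀ᶠ N : ℕ in atTop, ∑ m ∈ Icc 1 N, apSum g n H m ^ 2 ≤ (δ * H ^ 2 + 2 * M * H) * N := by
  set pairs := range H ×ˢ range H
  set near : ℕ × ℕ → Prop := fun p => p.1 < p.2 + M ∧ p.2 < p.1 + M
  set C : ℕ × ℕ → ℕ → ℝ := fun p N => ∑ m ∈ Icc 1 N, g (m + n * p.1) * g (m + n * p.2)
  have hfar : ∀ᶠ N : ℕ in atTop, ∀ p ∈ pairs.filter (¬ near ·), C p N ≤ δ * N := by
    refine (eventually_all_finset _).2 fun p hp => ?_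
    refine (hasCesaroMean_mul_comp_add_of_far hg hcorr ?_).eventually_sum_le hδ
    simp only [near, mem_filter, not_and_or, not_lt] at hp
    exact hp.2
  have hnear : ∀ p N, C p N ≤ N := fun p N => by
    refine (le_abs_self _).trans <| (abs_sum_le_sum_abs _ _).trans ?_
    simpa using sum_le_sum (s := Icc 1 N) fun m _ =>
      (abs_mul _ _).trans_le (mul_le_one₀ (hg _) (abs_nonneg _) (hg _))
  filter_upwards [hfar] with N hN
  calc ∑ m ∈ Icc 1 N, apSum g n H m ^ 2 = ∑ p ∈ pairs, C p N := by
        simp only [sq_apSum, C]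
        exact sum_comm
    _ = ∑ p ∈ pairs.filter (¬ near ·), C p N + ∑ p ∈ pairs.filter near, C p N :=
        (sum_filter_not_add_sum_filter _ _ _).symm
    _ ≤ #pairs * (δ * N) + #(pairs.filter near) * N := by
        gcongr
        · refine (sum_le_card_nsmul _ _ _ hN).trans ?_
          rw [nsmul_eq_mul]
          gcongr
          exact filter_subset _ _
        · simpa using sum_le_sum fun p (_ : p ∈ pairs.filter near) => hnear p N
    _ ≤ H ^ 2 * (δ * N) + (2 * M * H : ℕ) * N := by
        gcongr
        · simp [pairs, sq]
        · exact card_filter_lt_add_lt_add_le H M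
    _ = (δ * H ^ 2 + 2 * M * H) * N := by push_cast; ring

theorem vanDerCorput_hasCesaroMean_comp_mul (hg : ∀ m, |g m| ≤ 1)
    (hn : 0 < n) (hcorr : ∀ d, M ≤ d → HasCesaroMean (fun m => g m * g (m + n * d)) 0) :
    HasCesaroMean (fun q => g (n * q)) 0 := by
  refine Metric.tendsto_nhds.2 fun ε hε => ?_
  have hnR : (0 : ℝ) < n := by exact_mod_cast hn
  obtain ⟨H, hH⟩ := exists_nat_gt (16 * M * n / ε ^ 2)
  have hHR : (0 : ℝ) < H := lt_of_le_of_lt (by positivity) hH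
  set δ := ε ^ 2 / (8 * n)
  have hvar : n * (δ * H ^ 2 + 2 * M * H) ≤ (H * ε / 2) ^ 2 := by
    have hMH : 16 * M * n ≤ H * ε ^ 2 := by
      rw [div_lt_iff₀ (by positivity)] at hH; linarith
    have hδ : n * δ = ε ^ 2 / 8 := by simp only [δ]; field_simp
    nlinarith
  have hmul : Tendsto (fun N : ℕ => n * N) atTop atTop :=
    tendsto_id.const_mul_atTop' hn
  filter_upwards [hmul.eventually (eventually_sum_sq_apSum_le hg hcorr H (δ := δ) (by positivity)),
    tendsto_natCast_atTop_atTop.eventually_gt_atTop (4 * H / ε)] with N hsq hN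
  have hNR : (0 : ℝ) < N := lt_of_le_of_lt (by positivity) hN
  set S := ∑ q ∈ Icc 1 N, g (n * q)
  set T := ∑ q ∈ Icc 1 N, apSum g n H (n * q)
  have hT : |T| ≤ N * (H * ε / 2) := by
    refine abs_le_of_sq_le_sq ?_ (by positivity)
    calc T ^ 2 ≤ N * ∑ m ∈ Icc 1 (n * N), apSum g n H m ^ 2 := sq_sum_Icc_comp_mul_le _ hn N
      _ ≤ N * ((δ * H ^ 2 + 2 * M * H) * (n * N : ℕ)) := by gcongr
      _ = N ^ 2 * (n * (δ * H ^ 2 + 2 * M * H)) := by push_cast; ring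
      _ ≤ N ^ 2 * (H * ε / 2) ^ 2 := by gcongr
      _ = (N * (H * ε / 2)) ^ 2 := by ring
  have hS : H * |S| ≤ H * (2 * H + N * ε / 2) :=
    calc H * |S| = |T - (T - H * S)| := by rw [sub_sub_cancel, abs_mul, Nat.abs_cast]
      _ ≤ |T| + |T - H * S| := abs_sub _ _
      _ ≤ H * (2 * H + N * ε / 2) := by
        linarith [abs_sum_apSum_comp_mul_sub_le hg n H N]
  have hS' := le_of_mul_le_mul_left hS hHR
  rw [div_lt_iff₀ hε] at hN
  rw [Real.dist_eq, sub_zero, abs_div, Nat.abs_cast, div_lt_iff₀ hNR]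
  linarith

end VanDerCorput

theorem HasCesaroMean.comp_mul_of_correlation {f : ℕ → ℝ} {E : ℝ} {n M : ℕ}
    (hf : ∀ m, |f m - E| ≤ 1) (hn : 0 < n) (hmean : HasCesaroMean f E)
    (hcorr : ∀ d, M ≤ d → HasCesaroMean (fun m => f m * f (m + n * d)) (E ^ 2)) :
    HasCesaroMean (fun q => f (n * q)) E := by
  set g := fun m => f m - E
  have hg : HasCesaroMean g 0 := by simpa using hmean.sub (const E)
  have hgcorr : ∀ d, M ≤ d → HasCesaroMean (fun m => g m * g (m + n * d)) 0 := fun d hd => by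
    have h := ((hcorr d hd).sub (const (E ^ 2))).sub
      ((hg.const_mul E).add ((hg.comp_add hf (n * d)).const_mul E))
    convert h using 2 with m
    · simp only [g]; ring
    · ring
  simpa [g] using (vanDerCorput_hasCesaroMean_comp_mul hf hn hgcorr).add (const E)

def blockIndicator (x : ℕ → Bool) (K : Finset ℕ) (B : ℕ → Bool) (m : ℕ) : ℝ :=
  if ∀ k ∈ K, x (k + m) = B k then 1 else 0

theorem classicalNormalFun_iff {x : ℕ → Bool} :
    ClassicalNormalFun x ↔ ∀ K : Finset ℕ, K.Nonempty → (∀ k ∈ K, 0 < k) → ∀ B : ℕ → Bool,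
      HasCesaroMean (blockIndicator x K B) ((1 / 2) ^ #K) := by
  simp only [ClassicalNormalFun, HasCesaroMean, blockIndicator, sum_boole]

theorem abs_blockIndicator_sub_le (x : ℕ → Bool) (K : Finset ℕ) (B : ℕ → Bool) (m : ℕ) {E : ℝ}
    (hE₀ : 0 ≤ E) (hE₁ : E ≤ 1) : |blockIndicator x K B m - E| ≤ 1 := by
  unfold blockIndicator
  split_ifs <;> rw [abs_le] <;> constructor <;> linarith

theorem blockIndicator_comp_mul (x : ℕ → Bool) (K : Finset ℕ) (B : ℕ → Bool) {n : ℕ}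
    (hn : 0 < n) (q : ℕ) :
    blockIndicator (fun k => x (n * k)) K B q
      = blockIndicator x (K.image (n * ·)) (fun s => B (s / n)) (n * q) := by
  simp only [blockIndicator, forall_mem_image, mul_add, Nat.mul_div_cancel_left _ hn]

theorem blockIndicator_mul_comp_add (x : ℕ → Bool) {K : Finset ℕ} (B : ℕ → Bool) {c : ℕ}
    (hdisj : Disjoint K (K.image (· + c))) (m : ℕ) :
    blockIndicator x K B m * blockIndicator x K B (m + c)
      = blockIndicator x (K ∪ K.image (· + c)) (fun k => if k ∈ K then B k else B (k - c)) m := by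
  have hshift : ∀ k ∈ K, k + c ∉ K := fun k hk =>
    disjoint_right.1 hdisj (mem_image_of_mem _ hk)
  unfold blockIndicator
  rw [ite_zero_mul_ite_zero, one_mul]
  refine if_congr ?_ rfl rfl
  simp only [forall_mem_union, forall_mem_image, Nat.add_sub_cancel]
  refine and_congr (forall₂_congr fun k hk => by rw [if_pos hk])
    (forall₂_congr fun k hk => by rw [if_neg (hshift k hk), add_right_comm, add_assoc])

theorem ClassicalNormalFun.hasCesaroMean_blockIndicator_mul_comp_add {x : ℕ → Bool}
    (hx : ClassicalNormalFun x) {K : Finset ℕ} (hK : K.Nonempty) (hKpos : ∀ k ∈ K, 0 < k)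
    (B : ℕ → Bool) {c : ℕ} (hc : ∀ k ∈ K, k ≤ c) :
    HasCesaroMean (fun m => blockIndicator x K B m * blockIndicator x K B (m + c))
      (((1 / 2) ^ #K) ^ 2) := by
  have hdisj : Disjoint K (K.image (· + c)) := by
    simp only [disjoint_right, mem_image]
    rintro _ ⟨k, hk, rfl⟩ hkc
    have := hc _ hkc
    have := hKpos k hk
    omega
  have hcard : #(K ∪ K.image (· + c)) = 2 * #K := by
    rw [card_union_of_disjoint hdisj, card_image_of_injective _ (add_left_injective c), two_mul]
  have hpos : ∀ k ∈ K ∪ K.image (· + c), 0 < k := by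
    simp only [forall_mem_union, forall_mem_image]
    exact ⟨hKpos, fun k hk => (hKpos k hk).trans_le (Nat.le_add_right k c)⟩
  have h := classicalNormalFun_iff.1 hx _ (hK.mono subset_union_left) hpos
    (fun k => if k ∈ K then B k else B (k - c))
  rw [hcard, mul_comm, pow_mul] at h
  simpa only [blockIndicator_mul_comp_add x B hdisj] using h

/-- If `x : ℕ → {0,1}` is classical normal, then for every `n ≥ 1` the sequence
`k ↦ x (n·k)` is also classical normal. -/
theorem classicalNormal_along_multiples
    (x : ℕ → Bool) (hx : ClassicalNormalFun x) (n : ℕ) (hn : 0 < n) :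
    ClassicalNormalFun (fun k => x (n * k)) := by
  refine classicalNormalFun_iff.2 fun K hK hKpos B => ?_
  set nK := K.image (n * ·)
  have hnKpos : ∀ s ∈ nK, 0 < s := forall_mem_image.2 fun k hk => Nat.mul_pos hn (hKpos k hk)
  have hcard : #nK = #K := card_image_of_injective _ (mul_right_injective₀ hn.ne')
  have hmean := classicalNormalFun_iff.1 hx nK (hK.image _) hnKpos (fun s => B (s / n))
  have hcorr : ∀ d, K.sup id ≤ d → HasCesaroMean (fun m =>
      blockIndicator x nK (fun s => B (s / n)) m *
        blockIndicator x nK (fun s => B (s / n)) (m + n * d)) (((1 / 2) ^ #nK) ^ 2) :=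
    fun d hd => hx.hasCesaroMean_blockIndicator_mul_comp_add (hK.image _) hnKpos _ <|
      forall_mem_image.2 fun k hk => Nat.mul_le_mul_left n ((le_sup (f := id) hk).trans hd)
  have hE : ∀ m, |blockIndicator x nK (fun s => B (s / n)) m - (1 / 2) ^ #nK| ≤ 1 := fun m =>
    abs_blockIndicator_sub_le _ _ _ _ (by positivity) (pow_le_one₀ (by norm_num) (by norm_num))
  rw [← hcard, funext (blockIndicator_comp_mul x K B hn)]
  exact hmean.comp_mul_of_correlation hE hn hcorr
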